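/- Fix an even integer k = 2q ≥ 6 and let J_k be the even interior gadget. Then there exists a k-leaf root T of J_k such that m_T(t) = k and m_T(b) = 3. -/

import Mathlib

open SimpleGraph

/-- A vertex of a graph is a leaf if it has exactly one neighbor. -/
def IsLeafVert {W : Type} (T : SimpleGraph W) (w : W) : Prop := ∃! u, T.Adj w u

/-- `T` (a finite tree on vertex type `W`) together with the injection `f` of the
vertices of `G` onto the leaves of `T` is a `k`-leaf root of `G`:  the leaves of `T`
are exactly the image of `f`, and two distinct vertices of `G` are adjacent iff
their distance in `T` is at most `k`. -/
def IsLeafRoot {V W : Type} (G : SimpleGraph V) (k : ℕ)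
    (T : SimpleGraph W) (f : V → W) : Prop :=
  Finite W ∧ T.IsTree ∧ Function.Injective f ∧
    (∀ w : W, (∃ v, f v = w) ↔ IsLeafVert T w) ∧
    (∀ u v : V, u ≠ v → (G.Adj u v ↔ T.dist (f u) (f v) ≤ k))

/-- `G` is a `k`-leaf power: it admits a `k`-leaf root. -/
def IsKLeafPower {V : Type} (G : SimpleGraph V) (k : ℕ) : Prop :=
  ∃ (W : Type) (T : SimpleGraph W) (f : V → W), IsLeafRoot G k T f

/-- `m_T(v)`: the minimum over all `u ≠ v` of the distance in the leaf root `T`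
between the leaves corresponding to `u` and `v`. -/
noncomputable def mval {V W : Type} (T : SimpleGraph W) (f : V → W) (v : V) : ℕ :=
  sInf {d | ∃ u, u ≠ v ∧ T.dist (f u) (f v) = d}

/-- A vertex has degree at least three. -/
def HasDegreeGEThree {W : Type} (T : SimpleGraph W) (w : W) : Prop :=
  ∃ a b c : W, a ≠ b ∧ a ≠ c ∧ b ≠ c ∧ T.Adj w a ∧ T.Adj w b ∧ T.Adj w c

/-- A spine of a tree: a path containing every vertex of degree at least 3.  A tree
having a spine is exactly a caterpillar subdivision. -/
def IsSpine {W : Type} (T : SimpleGraph W) {a b : W} (p : T.Walk a b) : Prop :=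
  p.IsPath ∧ ∀ w : W, HasDegreeGEThree T w → w ∈ p.support

/-- A linear `k`-leaf root: a `k`-leaf root whose tree is a caterpillar subdivision. -/
def IsLinearLeafRoot {V W : Type} (G : SimpleGraph V) (k : ℕ)
    (T : SimpleGraph W) (f : V → W) : Prop :=
  IsLeafRoot G k T f ∧ ∃ (a b : W) (p : T.Walk a b), IsSpine T p

/-- `G` is a linear `k`-leaf power: it admits a linear `k`-leaf root. -/
def IsLinearKLeafPower {V : Type} (G : SimpleGraph V) (k : ℕ) : Prop :=
  ∃ (W : Type) (T : SimpleGraph W) (f : V → W), IsLinearLeafRoot G k T f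

/-- A cycle of length `n` in `G`, given as an injective map from `ZMod n` with
consecutive images adjacent. -/
def IsCycleIn {V : Type} (G : SimpleGraph V) (n : ℕ) (f : ZMod n → V) : Prop :=
  Function.Injective f ∧ ∀ i : ZMod n, G.Adj (f i) (f (i + 1))

/-- `G` is chordal: every cycle of length at least 4 has a chord. -/
def Chordal {V : Type} (G : SimpleGraph V) : Prop :=
  ∀ n : ℕ, 4 ≤ n → ∀ f : ZMod n → V, IsCycleIn G n f →
    ∃ i j : ZMod n, j ≠ i ∧ j ≠ i + 1 ∧ j ≠ i - 1 ∧ G.Adj (f i) (f j)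

/-- `G` is strongly chordal: chordal, and every even cycle of length at least 6 has
an odd chord (a chord joining two vertices an odd distance apart along the cycle). -/
def StronglyChordal {V : Type} (G : SimpleGraph V) : Prop :=
  Chordal G ∧ ∀ n : ℕ, 6 ≤ n → Even n → ∀ f : ZMod n → V, IsCycleIn G n f →
    ∃ i j : ZMod n, Odd ((j - i).val) ∧ j ≠ i + 1 ∧ j ≠ i - 1 ∧ G.Adj (f i) (f j)

/-- Vertices of the even interior gadget for `k = 2q`: `t`, `b`, `z1`, `z2`,
`x i` for `i : Fin q` (representing `x_{i+1}`), and `y i` for `i : Fin (q-1)`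
(representing `y_{i+2}`). -/
inductive JVert (q : ℕ) : Type where
  | t : JVert q
  | b : JVert q
  | z1 : JVert q
  | z2 : JVert q
  | x : Fin q → JVert q
  | y : Fin (q - 1) → JVert q

/-- The even interior gadget `J_k` for even `k = 2q ≥ 6`: edges `t x_i` for all
`1 ≤ i ≤ q`; `b x_i`, `z1 x_i`, `z2 x_i` for all `2 ≤ i ≤ q`; `x_i x_j` for `i < j`;
`y_i x_j` for `2 ≤ i ≤ j ≤ q`; `b y_q`; `b z1`; and `b z2`. -/
def evenGadget (q : ℕ) : SimpleGraph (JVert q) :=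
  SimpleGraph.fromRel (fun u v => match u, v with
    | .t, .x _ => True
    | .b, .x i => 1 ≤ (i : ℕ)
    | .z1, .x i => 1 ≤ (i : ℕ)
    | .z2, .x i => 1 ≤ (i : ℕ)
    | .x i, .x j => i ≠ j
    | .y a, .x c => (a : ℕ) + 1 ≤ (c : ℕ)
    | .b, .y a => (a : ℕ) = q - 2
    | .b, .z1 => True
    | .b, .z2 => True
    | _, _ => False)

/-!
The root is a caterpillar: a spine `0, 1, …, q + 1` and, for every vertex `v` of `J_{2q}`, a
pendant path (leg) of length `L v` hanging from spine vertex `P v`, whose end is the leaf `v`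
(`P = evenGadgetPos`, `L = evenGadgetLegLen`). Leaves `u ≠ v` are then at distance
`|P u - P v| + L u + L v`, so both the leaf-root property and the values `m_T(t) = 2q`,
`m_T(b) = 3` reduce to linear arithmetic, vertex pair by vertex pair.

Such a tree is presented by a parent map whose non-fixed points strictly decrease a rank;
distances in it are computed by a `1`-Lipschitz potential that strictly descends along some
edge from every vertex other than its zero.
-/

theorem not_isLeafVert_of_adj {W : Type} {T : SimpleGraph W} {w a c : W} (ha : T.Adj w a)
    (hc : T.Adj w c) (hac : a ≠ c) : ¬IsLeafVert T w := fun ⟨_, _, huniq⟩ =>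
  hac ((huniq a ha).trans (huniq c hc).symm)

section Potential

variable {V : Type*} {G : SimpleGraph V} {φ : V → ℕ}

theorem SimpleGraph.Walk.le_add_length_of_lipschitz (hφ : ∀ a c, G.Adj a c → φ a ≤ φ c + 1)
    {a b : V} (p : G.Walk a b) : φ a ≤ φ b + p.length := by
  induction p with
  | nil => simp
  | cons h p ih => have := hφ _ _ h; rw [Walk.length_cons]; omega

theorem SimpleGraph.dist_eq_of_lipschitz_of_descent {b : V} (hb : φ b = 0)
    (hφ : ∀ a c, G.Adj a c → φ a ≤ φ c + 1)
    (hdesc : ∀ a, a ≠ b → ∃ c, G.Adj a c ∧ φ c + 1 = φ a) (a : V) : G.dist a b = φ a := by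
  have hwalk : ∀ n a, φ a = n → ∃ p : G.Walk a b, p.length = n := by
    intro n
    induction n using Nat.strong_induction_on with
    | _ n ih =>
      intro a ha
      by_cases hab : a = b
      · subst hab; exact ⟨.nil, by simp_all⟩
      obtain ⟨c, hac, hc⟩ := hdesc a hab
      obtain ⟨p, hp⟩ := ih (φ c) (by omega) c rfl
      exact ⟨.cons hac p, by rw [Walk.length_cons]; omega⟩
  obtain ⟨p, hp⟩ := hwalk _ a rfl
  obtain ⟨p', hp'⟩ := p.reachable.exists_walk_length_eq_dist
  have := p'.le_add_length_of_lipschitz hφ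
  have := dist_le p
  omega

end Potential

section ParentGraph

variable {V : Type*} {parent : V → V} {rank : V → ℕ}

def parentGraph (parent : V → V) : SimpleGraph V := SimpleGraph.fromRel fun a b => parent a = b

theorem parentGraph_adj {a b : V} :
    (parentGraph parent).Adj a b ↔ a ≠ b ∧ (parent a = b ∨ parent b = a) :=
  fromRel_adj ..

theorem parentGraph_adj_parent {a : V} (h : parent a ≠ a) :
    (parentGraph parent).Adj a (parent a) :=
  parentGraph_adj.2 ⟨h.symm, .inl rfl⟩

theorem eq_parent_of_parentGraph_adj (hrank : ∀ v, parent v ≠ v → rank (parent v) < rank v)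
    {a b : V} (h : (parentGraph parent).Adj a b) (hle : rank b ≤ rank a) : b = parent a := by
  obtain ⟨hab, rfl | rfl⟩ := parentGraph_adj.1 h
  · rfl
  · exact absurd (hrank b hab) hle.not_gt

theorem parentGraph_isAcyclic (hrank : ∀ v, parent v ≠ v → rank (parent v) < rank v) :
    (parentGraph parent).IsAcyclic := by
  classical
  intro v c hc
  obtain ⟨w, hw, hmax⟩ := c.support.toFinset.exists_max_image rank ⟨v, by simp⟩
  rw [List.mem_toFinset] at hw
  set c' := c.rotate w hw
  have hc' : c'.IsCycle := hc.rotate hw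
  have hle : ∀ u ∈ c'.support, rank u ≤ rank w := fun u hu =>
    hmax u (List.mem_toFinset.2 ((c.mem_support_rotate_iff w hw).1 hu))
  -- both cycle-neighbours of the top vertex `w` must be its parent
  have hsnd := eq_parent_of_parentGraph_adj hrank (c'.adj_snd hc'.not_nil)
    (hle _ (c'.getVert_mem_support 1))
  have hpen := eq_parent_of_parentGraph_adj hrank (c'.adj_penultimate hc'.not_nil).symm
    (hle _ (c'.getVert_mem_support _))
  exact hc'.snd_ne_penultimate (hsnd.trans hpen.symm)

theorem parentGraph_connected (hrank : ∀ v, parent v ≠ v → rank (parent v) < rank v) {r : V}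
    (hroot : ∀ v, parent v = v → v = r) : (parentGraph parent).Connected := by
  have hreach : ∀ n v, rank v = n → (parentGraph parent).Reachable v r := by
    intro n
    induction n using Nat.strong_induction_on with
    | _ n ih =>
      intro v hv
      by_cases hp : parent v = v
      · rw [hroot v hp]
      · exact (parentGraph_adj_parent hp).reachable.trans
          (ih _ (hv ▸ hrank v hp) _ rfl)
  exact (connected_iff_exists_forall_reachable _).2 ⟨r, fun v => (hreach _ v rfl).symm⟩

end ParentGraph

theorem isLeafVert_parentGraph_iff {V : Type} {parent : V → V} {rank : V → ℕ}
    (hrank : ∀ v, parent v ≠ v → rank (parent v) < rank v) {w : V} (hw : parent w ≠ w) :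
    IsLeafVert (parentGraph parent) w ↔ ∀ c, parent c = w → c = w := by
  constructor
  · rintro ⟨u, -, huniq⟩ c hc
    by_contra hcw
    have hcp : c = parent w := (huniq c (parentGraph_adj.2 ⟨Ne.symm hcw, .inr hc⟩)).trans
      (huniq _ (parentGraph_adj_parent hw)).symm
    subst hcp
    have := hrank _ (hc.trans_ne hw.symm)
    rw [hc] at this
    exact (hrank w hw).not_gt this
  · intro hchild
    refine ⟨parent w, parentGraph_adj_parent hw, fun u hu => ?_⟩
    obtain ⟨hne, h | h⟩ := parentGraph_adj.1 hu
    · exact h.symm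
    · exact absurd (hchild u h) hne.symm

namespace Caterpillar

section

variable {V : Type*} {N : ℕ} {pos : V → Fin (N + 1)} {len : V → ℕ}

variable (pos) in
/-- Vertices are the spine `Fin (N + 1)` and, for each `v`, the leg vertices `⟨v, i⟩` at height
`i + 1` above spine vertex `pos v`. Spine vertex `n` goes to `n - 1`, fixing the root `0`, and
each leg vertex goes one step down its leg. -/
def parent : Fin (N + 1) ⊕ (Σ v, Fin (len v)) → Fin (N + 1) ⊕ (Σ v, Fin (len v))
  | .inl n => .inl ⟨n - 1, by omega⟩
  | .inr ⟨v, ⟨0, _⟩⟩ => .inl (pos v)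
  | .inr ⟨v, ⟨i + 1, h⟩⟩ => .inr ⟨v, ⟨i, by omega⟩⟩

variable (pos) in
def rank : Fin (N + 1) ⊕ (Σ v, Fin (len v)) → ℕ
  | .inl n => n
  | .inr ⟨v, i⟩ => pos v + i + 1

variable (pos len) in
def _root_.caterpillar : SimpleGraph (Fin (N + 1) ⊕ Σ v, Fin (len v)) :=
  parentGraph (parent pos)

theorem rank_parent_lt (w : Fin (N + 1) ⊕ Σ v, Fin (len v)) (hw : parent pos w ≠ w) :
    rank pos (parent pos w) < rank pos w := by
  rcases w with n | ⟨v, ⟨_ | i, h⟩⟩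
  · have : (n : ℕ) ≠ 0 := fun h0 => hw (by simp [parent, Fin.ext_iff, h0])
    simp only [parent, rank]; omega
  · simp [parent, rank]
  · simp [parent, rank]

theorem eq_zero_of_parent_eq (w : Fin (N + 1) ⊕ Σ v, Fin (len v)) (hw : parent pos w = w) :
    w = .inl 0 := by
  rcases w with n | ⟨v, ⟨_ | i, h⟩⟩
  · simp only [parent, Sum.inl.injEq, Fin.ext_iff] at hw ⊢
    simp only [Fin.val_zero]; omega
  · simp [parent] at hw
  · simp [parent] at hw

theorem isTree : (caterpillar pos len).IsTree :=
  ⟨parentGraph_connected rank_parent_lt eq_zero_of_parent_eq,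
    parentGraph_isAcyclic rank_parent_lt⟩

theorem adj_of_parent_eq {a c : Fin (N + 1) ⊕ Σ v, Fin (len v)} (h : parent pos c = a)
    (hne : a ≠ c) : (caterpillar pos len).Adj a c :=
  parentGraph_adj.2 ⟨hne, .inr h⟩

theorem parent_inr_ne (v : V) (i : Fin (len v)) : parent pos (.inr ⟨v, i⟩) ≠ .inr ⟨v, i⟩ := by
  rcases i with ⟨_ | i, h⟩ <;> simp [parent]

theorem val_add_one_lt_of_parent_eq {c : Fin (N + 1) ⊕ Σ v, Fin (len v)} {v : V}
    {i : Fin (len v)} (h : parent pos c = .inr ⟨v, i⟩) : (i : ℕ) + 1 < len v := by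
  rcases c with n | ⟨u, ⟨_ | j, hj⟩⟩
  · simp [parent] at h
  · simp [parent] at h
  · simp only [parent, Sum.inr.injEq, Sigma.mk.inj_iff] at h
    obtain ⟨rfl, h⟩ := h
    rw [← eq_of_heq h]
    exact hj

def leaf (hlen : ∀ v, 0 < len v) (v : V) : Fin (N + 1) ⊕ Σ v, Fin (len v) :=
  .inr ⟨v, ⟨len v - 1, Nat.sub_one_lt_of_lt (hlen v)⟩⟩

theorem leaf_injective (hlen : ∀ v, 0 < len v) : Function.Injective (leaf (N := N) hlen) :=
  fun _ _ h => congrArg Sigma.fst (Sum.inr_injective h)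

variable (pos) in
/-- Closed form of the distance to the leaf of `v` (see `dist_leaf`). -/
def distToLeaf [DecidableEq V] (v : V) : Fin (N + 1) ⊕ (Σ v, Fin (len v)) → ℕ
  | .inl n => Nat.dist n (pos v) + len v
  | .inr ⟨u, i⟩ => if u = v then len v - (i + 1) else i + 1 + Nat.dist (pos u) (pos v) + len v

theorem distToLeaf_le_parent [DecidableEq V] (v : V) (w : Fin (N + 1) ⊕ Σ v, Fin (len v)) :
    distToLeaf pos v w ≤ distToLeaf pos v (parent pos w) + 1 ∧
      distToLeaf pos v (parent pos w) ≤ distToLeaf pos v w + 1 := by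
  rcases w with n | ⟨u, ⟨_ | i, h⟩⟩
  · simp only [distToLeaf, parent, Nat.dist]; omega
  · by_cases huv : u = v
    · subst huv; simp only [distToLeaf, parent, Nat.dist, ↓reduceIte]; omega
    · simp only [distToLeaf, parent, if_neg huv]; omega
  · by_cases huv : u = v
    · subst huv; simp only [distToLeaf, parent, ↓reduceIte]; omega
    · simp only [distToLeaf, parent, if_neg huv]; omega

theorem distToLeaf_le_of_adj [DecidableEq V] (v : V) {a c : Fin (N + 1) ⊕ Σ v, Fin (len v)}
    (h : (caterpillar pos len).Adj a c) : distToLeaf pos v a ≤ distToLeaf pos v c + 1 := by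
  obtain ⟨-, rfl | rfl⟩ := parentGraph_adj.1 h
  · exact (distToLeaf_le_parent v a).1
  · exact (distToLeaf_le_parent v c).2

theorem exists_adj_distToLeaf_add_one_eq [DecidableEq V] (hlen : ∀ v, 0 < len v) (v : V)
    {w : Fin (N + 1) ⊕ Σ v, Fin (len v)} (hw : w ≠ leaf hlen v) :
    ∃ c, (caterpillar pos len).Adj w c ∧ distToLeaf pos v c + 1 = distToLeaf pos v w := by
  -- on the spine, step towards `pos v` and then up the leg of `v`; on any other leg, step down
  rcases w with n | ⟨u, i⟩
  · rcases lt_trichotomy (n : ℕ) (pos v) with hn | hn | hn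
    · refine ⟨.inl ⟨n + 1, by omega⟩,
        adj_of_parent_eq (by simp [parent]) (by simp [Fin.ext_iff]), ?_⟩
      simp only [distToLeaf, Nat.dist]; omega
    · refine ⟨.inr ⟨v, ⟨0, hlen v⟩⟩, adj_of_parent_eq ?_ (by simp), ?_⟩
      · simp [parent, Fin.ext_iff, hn]
      · simp only [distToLeaf, Nat.dist, ↓reduceIte]; have := hlen v; omega
    · have hp : parent (len := len) pos (.inl n) ≠ .inl n := by
        simp only [parent, ne_eq, Sum.inl.injEq, Fin.ext_iff]; omega
      refine ⟨_, parentGraph_adj_parent hp, ?_⟩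
      simp only [distToLeaf, parent, Nat.dist]; omega
  by_cases huv : u = v
  · subst huv
    have hi : (i : ℕ) + 1 < len u := by
      by_contra hi
      refine hw ?_
      simp only [leaf, Sum.inr.injEq, Sigma.mk.injEq, heq_eq_eq, true_and, Fin.ext_iff]
      omega
    refine ⟨.inr ⟨u, ⟨i + 1, hi⟩⟩, adj_of_parent_eq rfl (by simp [Fin.ext_iff]), ?_⟩
    simp only [distToLeaf, ↓reduceIte]; omega
  · refine ⟨_, parentGraph_adj_parent (parent_inr_ne u i), ?_⟩
    rcases i with ⟨_ | i, h⟩ <;> simp only [distToLeaf, parent, if_neg huv] <;> omega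

theorem dist_leaf (hlen : ∀ v, 0 < len v) {u v : V} (huv : u ≠ v) :
    (caterpillar pos len).dist (leaf hlen u) (leaf hlen v) =
      Nat.dist (pos u) (pos v) + len u + len v := by
  classical
  rw [dist_eq_of_lipschitz_of_descent (φ := distToLeaf pos v) ?_
    (fun _ _ => distToLeaf_le_of_adj v) (fun _ => exists_adj_distToLeaf_add_one_eq hlen v)]
  · simp only [distToLeaf, leaf, if_neg huv]; have := hlen u; omega
  · simp only [distToLeaf, leaf, ↓reduceIte]; have := hlen v; omega

end

section

variable {V : Type} {N : ℕ} {pos : V → Fin (N + 1)} {len : V → ℕ}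

theorem not_isLeafVert_inl (hN : 0 < N) (hlen : ∀ v, 0 < len v) (h0 : ∃ v, pos v = 0)
    (hlast : ∃ v, pos v = Fin.last N) (n : Fin (N + 1)) :
    ¬IsLeafVert (caterpillar pos len) (.inl n) := by
  by_cases hn : (n : ℕ) = N
  · obtain ⟨v, hv⟩ := hlast
    refine not_isLeafVert_of_adj (a := .inl ⟨n - 1, by omega⟩) (c := .inr ⟨v, ⟨0, hlen v⟩⟩)
      (parentGraph_adj_parent ?_) (adj_of_parent_eq ?_ (by simp)) (by simp)
    · simp only [parent, ne_eq, Sum.inl.injEq, Fin.ext_iff]; omega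
    · simp [parent, hv, Fin.ext_iff, hn]
  have hup : (caterpillar pos len).Adj (.inl n) (.inl ⟨n + 1, by omega⟩) :=
    adj_of_parent_eq (by simp [parent]) (by simp [Fin.ext_iff])
  by_cases hn0 : (n : ℕ) = 0
  · obtain ⟨v, hv⟩ := h0
    refine not_isLeafVert_of_adj (adj_of_parent_eq (c := .inr ⟨v, ⟨0, hlen v⟩⟩) ?_ (by simp))
      hup (by simp)
    simp [parent, hv, Fin.ext_iff, hn0]
  · refine not_isLeafVert_of_adj (parentGraph_adj_parent ?_) hup ?_
    · simp only [parent, ne_eq, Sum.inl.injEq, Fin.ext_iff]; omega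
    · simp [parent, Fin.ext_iff]

theorem isLeafVert_iff (hN : 0 < N) (hlen : ∀ v, 0 < len v) (h0 : ∃ v, pos v = 0)
    (hlast : ∃ v, pos v = Fin.last N) (w : Fin (N + 1) ⊕ Σ v, Fin (len v)) :
    IsLeafVert (caterpillar pos len) w ↔ ∃ v, leaf hlen v = w := by
  rcases w with n | ⟨v, i⟩
  · simp [leaf, not_isLeafVert_inl hN hlen h0 hlast n]
  rw [caterpillar, isLeafVert_parentGraph_iff rank_parent_lt (parent_inr_ne v i)]
  constructor
  · intro hchild
    refine ⟨v, ?_⟩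
    by_cases hi : (i : ℕ) + 1 < len v
    · exact absurd (hchild (.inr ⟨v, ⟨i + 1, hi⟩⟩) rfl) (by simp [Fin.ext_iff])
    · simp only [leaf, Sum.inr.injEq, Sigma.mk.injEq, heq_eq_eq, true_and, Fin.ext_iff]
      omega
  · rintro ⟨u, hu⟩ c hc
    simp only [leaf, Sum.inr.injEq, Sigma.mk.inj_iff] at hu
    obtain ⟨rfl, hu⟩ := hu
    have := val_add_one_lt_of_parent_eq hc
    rw [← eq_of_heq hu, Fin.val_mk] at this
    omega

end

end Caterpillar

theorem mval_eq_of_forall_le {V W : Type} {T : SimpleGraph W} {f : V → W} {u v : V} {m : ℕ}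
    (huv : u ≠ v) (hu : T.dist (f u) (f v) = m) (hmin : ∀ w, w ≠ v → m ≤ T.dist (f w) (f v)) :
    mval T f v = m :=
  le_antisymm (Nat.sInf_le ⟨u, huv, hu⟩)
    (le_csInf ⟨m, u, huv, hu⟩ fun _ ⟨w, hw, hd⟩ => hd ▸ hmin w hw)

instance (q : ℕ) : Finite (JVert q) :=
  Finite.of_surjective (fun i : Fin 4 ⊕ Fin q ⊕ Fin (q - 1) => match i with
      | .inl i => ![.t, .b, .z1, .z2] i
      | .inr (.inl j) => .x j
      | .inr (.inr a) => .y a)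
    (by rintro (_ | _ | _ | _ | j | a)
        exacts [⟨.inl 0, rfl⟩, ⟨.inl 1, rfl⟩, ⟨.inl 2, rfl⟩, ⟨.inl 3, rfl⟩, ⟨.inr (.inl j), rfl⟩,
          ⟨.inr (.inr a), rfl⟩])

/-- Position on the spine `0, …, q + 1` of the leg carrying each vertex of `J_{2q}`:
`x_i` sits at `i`, `y_i` at `i` for `i < q`, and `b`, `y_q` at the far end `q + 1`. -/
def evenGadgetPos (q : ℕ) : JVert q → ℕ
  | .t => 0
  | .b => q + 1
  | .z1 => 2
  | .z2 => 3
  | .x j => j + 1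
  | .y a => if (a : ℕ) = q - 2 then q + 1 else a + 2

def evenGadgetLegLen (q : ℕ) : JVert q → ℕ
  | .t => q - 1
  | .b => 1
  | .z1 => q
  | .z2 => q
  | .x j => q - j
  | .y a => if (a : ℕ) = q - 2 then 2 * q - 2 else q + a + 1

def evenGadgetLeafDist (q : ℕ) (u v : JVert q) : ℕ :=
  Nat.dist (evenGadgetPos q u) (evenGadgetPos q v) + evenGadgetLegLen q u + evenGadgetLegLen q v

section EvenGadget

variable {q : ℕ}

theorem evenGadgetPos_lt (hq : 2 ≤ q) (v : JVert q) : evenGadgetPos q v < q + 2 := by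
  rcases v with _ | _ | _ | _ | j | a <;> simp only [evenGadgetPos] <;> (try split) <;> omega

theorem evenGadgetLegLen_pos (hq : 2 ≤ q) (v : JVert q) : 0 < evenGadgetLegLen q v := by
  rcases v with _ | _ | _ | _ | j | a <;> simp only [evenGadgetLegLen] <;> (try split) <;> omega

theorem evenGadget_adj_iff (hq : 3 ≤ q) {u v : JVert q} (huv : u ≠ v) :
    (evenGadget q).Adj u v ↔ evenGadgetLeafDist q u v ≤ 2 * q := by
  rw [evenGadget, SimpleGraph.fromRel_adj]
  rcases u with _ | _ | _ | _ | j | a <;> rcases v with _ | _ | _ | _ | j' | a' <;>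
    simp_all [evenGadgetLeafDist, evenGadgetPos, evenGadgetLegLen, Nat.dist, Fin.ext_iff] <;>
    (try split_ifs) <;> omega

theorem two_mul_le_evenGadgetLeafDist_t {w : JVert q} (hw : w ≠ .t) :
    2 * q ≤ evenGadgetLeafDist q w .t := by
  rcases w with _ | _ | _ | _ | j | a <;>
    simp_all [evenGadgetLeafDist, evenGadgetPos, evenGadgetLegLen, Nat.dist] <;>
    (try split_ifs) <;> omega

theorem three_le_evenGadgetLeafDist_b (hq : 2 ≤ q) {w : JVert q} (hw : w ≠ .b) :
    3 ≤ evenGadgetLeafDist q w .b := by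
  rcases w with _ | _ | _ | _ | j | a <;>
    simp_all [evenGadgetLeafDist, evenGadgetPos, evenGadgetLegLen, Nat.dist] <;>
    (try split_ifs) <;> omega

end EvenGadget

theorem even_gadget_root_T (q : ℕ) (hq : 3 ≤ q) (k : ℕ) (hk : k = 2 * q) :
    ∃ (W : Type) (T : SimpleGraph W) (f : JVert q → W),
      IsLeafRoot (evenGadget q) k T f ∧
      mval T f JVert.t = k ∧ mval T f JVert.b = 3 := by
  subst hk
  have hlen := evenGadgetLegLen_pos (by omega : 2 ≤ q)
  let pos (v : JVert q) : Fin (q + 2) := ⟨evenGadgetPos q v, evenGadgetPos_lt (by omega) v⟩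
  have hdist {u v : JVert q} (huv : u ≠ v) : (caterpillar pos (evenGadgetLegLen q)).dist
      (Caterpillar.leaf hlen u) (Caterpillar.leaf hlen v) = evenGadgetLeafDist q u v :=
    Caterpillar.dist_leaf hlen huv
  refine ⟨_, caterpillar pos (evenGadgetLegLen q), Caterpillar.leaf hlen,
    ⟨inferInstance, Caterpillar.isTree, Caterpillar.leaf_injective hlen,
      fun w => (Caterpillar.isLeafVert_iff (by omega) hlen ⟨.t, Fin.ext rfl⟩ ⟨.b, rfl⟩ w).symm,
      fun u v huv => hdist huv ▸ evenGadget_adj_iff hq huv⟩, ?_, ?_⟩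
  · refine mval_eq_of_forall_le (u := .x ⟨0, by omega⟩) (by simp) ((hdist (by simp)).trans ?_)
      fun w hw => hdist hw ▸ two_mul_le_evenGadgetLeafDist_t hw
    simp only [evenGadgetLeafDist, evenGadgetPos, evenGadgetLegLen, Nat.dist]; omega
  · refine mval_eq_of_forall_le (u := .x ⟨q - 1, by omega⟩) (by simp) ((hdist (by simp)).trans ?_)
      fun w hw => hdist hw ▸ three_le_evenGadgetLeafDist_b (by omega) hw
    simp only [evenGadgetLeafDist, evenGadgetPos, evenGadgetLegLen, Nat.dist]; omega
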